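/- arXiv:2306.08217 — 4 statements merged into one kernel-verified Lean document; each statement's English description precedes it below -/
import Mathlib

section
/- Every graph G with minimum degree at least 2k−1 admits a vertex partition V(G) = V₁ ∪ V₂ such that every vertex of V₁ has at least k neighbors in V₂ and every vertex of V₂ has at least k neighbors in V₁. -/
/-!
Take a set `S` maximising the number of edges between `S` and `Sᶜ`. Moving a vertex `v` across
changes that number by (neighbours of `v` on its own side) − (neighbours of `v` across), so by
maximality every vertex has at least half of its `≥ 2k - 1` neighbours on the other side,
hence at least `k`.
-/

open Finset

namespace SimpleGraph

variable {V : Type*} (G : SimpleGraph V) [DecidableRel G.Adj]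

theorem card_interedges_comm (s t : Finset V) :
    #(G.interedges s t) = #(G.interedges t s) :=
  have := G.symm
  Rel.card_interedges_comm s t

variable [Fintype V] [DecidableEq V]

theorem card_interedges_eq_sum_card_neighborFinset_inter (s t : Finset V) :
    #(G.interedges s t) = ∑ v ∈ s, #(G.neighborFinset v ∩ t) := by
  rw [interedges_def, card_filter, sum_product]
  refine sum_congr rfl fun v _ => ?_
  rw [← card_filter]
  congr 1
  ext w
  simp [and_comm]

theorem card_interedges_insert_left {v : V} {s : Finset V} (hv : v ∉ s) (t : Finset V) :
    #(G.interedges (insert v s) t) = #(G.neighborFinset v ∩ t) + #(G.interedges s t) := by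
  simp only [card_interedges_eq_sum_card_neighborFinset_inter, sum_insert hv]

theorem card_interedges_insert_right (s : Finset V) {v : V} {t : Finset V} (hv : v ∉ t) :
    #(G.interedges s (insert v t)) = #(G.neighborFinset v ∩ s) + #(G.interedges s t) := by
  rw [card_interedges_comm, card_interedges_insert_left G hv, card_interedges_comm]

theorem card_neighborFinset_inter_add_inter_compl (v : V) (s : Finset V) :
    #(G.neighborFinset v ∩ s) + #(G.neighborFinset v ∩ sᶜ) = G.degree v := by
  rw [← sdiff_eq_inter_compl, card_inter_add_card_sdiff, card_neighborFinset_eq_degree]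

def cutSize (s : Finset V) : ℕ := #(G.interedges s sᶜ)

theorem cutSize_compl (s : Finset V) : G.cutSize sᶜ = G.cutSize s := by
  rw [cutSize, cutSize, compl_compl, card_interedges_comm]

theorem cutSize_erase_add {v : V} {s : Finset V} (hv : v ∈ s) :
    G.cutSize (s.erase v) + #(G.neighborFinset v ∩ sᶜ) =
      G.cutSize s + #(G.neighborFinset v ∩ s) := by
  have hcut : G.cutSize s = #(G.neighborFinset v ∩ sᶜ) + #(G.interedges (s.erase v) sᶜ) := by
    rw [cutSize, ← card_interedges_insert_left G (notMem_erase v s), insert_erase hv]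
  have hcut_erase :
      G.cutSize (s.erase v) = #(G.neighborFinset v ∩ s) + #(G.interedges (s.erase v) sᶜ) := by
    rw [cutSize, compl_erase, card_interedges_insert_right G _ (notMem_compl.2 hv), inter_erase,
      erase_eq_of_notMem (by simp)]
  omega

theorem degree_le_two_mul_card_neighborFinset_inter_compl {s : Finset V}
    (hmax : ∀ t, G.cutSize t ≤ G.cutSize s) {v : V} (hv : v ∈ s) :
    G.degree v ≤ 2 * #(G.neighborFinset v ∩ sᶜ) := by
  have hmove := G.cutSize_erase_add hv
  have hopt := hmax (s.erase v)
  have hsplit := G.card_neighborFinset_inter_add_inter_compl v s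
  omega

end SimpleGraph

theorem stmt5_general (V : Type) [Fintype V] [DecidableEq V]
    (G : SimpleGraph V) [DecidableRel G.Adj] (k : ℕ)
    (hδ : 2 * k - 1 ≤ G.minDegree) :
    ∃ V₁ V₂ : Finset V, V₁ ∪ V₂ = Finset.univ ∧ Disjoint V₁ V₂ ∧
      (∀ v ∈ V₁, k ≤ (G.neighborFinset v ∩ V₂).card) ∧
      (∀ v ∈ V₂, k ≤ (G.neighborFinset v ∩ V₁).card) := by
  obtain ⟨S, hmax⟩ := Finite.exists_max G.cutSize
  have hmax_compl : ∀ t, G.cutSize t ≤ G.cutSize Sᶜ := by rwa [G.cutSize_compl]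
  have hdeg : ∀ v, 2 * k - 1 ≤ G.degree v := fun v => hδ.trans (G.minDegree_le_degree v)
  refine ⟨S, Sᶜ, union_compl S, disjoint_compl_right, fun v hv => ?_, fun v hv => ?_⟩
  · have hacross := G.degree_le_two_mul_card_neighborFinset_inter_compl hmax hv
    have := hdeg v
    omega
  · have hacross := G.degree_le_two_mul_card_neighborFinset_inter_compl hmax_compl hv
    rw [compl_compl] at hacross
    have := hdeg v
    omega

theorem stmt5 (V : Type) [Fintype V] [DecidableEq V]
    (G : SimpleGraph V) [DecidableRel G.Adj] (k : ℕ) (hk : 0 < k)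
    (hδ : 2 * k - 1 ≤ G.minDegree) :
    ∃ V₁ V₂ : Finset V, V₁ ∪ V₂ = Finset.univ ∧ Disjoint V₁ V₂ ∧
      (∀ v ∈ V₁, k ≤ (G.neighborFinset v ∩ V₂).card) ∧
      (∀ v ∈ V₂, k ≤ (G.neighborFinset v ∩ V₁).card) :=
  stmt5_general V G k hδ
end

section
/- (Ore's theorem on bipartite f-factors) Let G be a bipartite graph with parts V₁ and V₂ and let f : V(G) → ℕ. There exists a subgraph H of G with d_H(x) = f(x) for all x ∈ V₁ and d_H(y) ≤ f(y) for all y ∈ V₂ if and only if for every subset X ⊆ V₁, Σ_{x∈X} f(x) ≤ Σ_{y∈V₂} min{f(y), e_G(y, X)}, where e_G(y, X) is the number of neighbors of y in X. -/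
/-!
Necessity is double counting of the edges of `H` between `X` and `V₂`.

Sufficiency is by induction on `∑ x ∈ V₁, f x`. Call `X ⊆ V₁` tight if Ore's inequality is an
equality for `X`. The right-hand side `X ↦ ∑ y ∈ V₂, min (f y) e_G(y, X)` is submodular, so tight
sets are closed under union and, for `x₀ ∈ V₁` with `f x₀ > 0`, there is a largest tight set `T`
avoiding `x₀`. Ore's inequality for `T ∪ {x₀}` yields a neighbour `y₀` of `x₀` with
`e_G(y₀, T) < f y₀`. Deleting the edge `x₀y₀` and decreasing `f` by one at `x₀` and `y₀` preserves
Ore's condition, and the edge can be added back to the subgraph given by induction.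
-/

open Finset

section TsubSingle

variable {ι : Type*} [DecidableEq ι] {f : ι → ℕ} {x y : ι}

lemma tsub_single_tsub_single_add (hxy : x ≠ y) (hx : 0 < f x) (hy : 0 < f y) (v : ι) :
    (f - Pi.single x 1 - Pi.single y 1 : ι → ℕ) v +
      ((Pi.single x 1 : ι → ℕ) v + (Pi.single y 1 : ι → ℕ) v) = f v := by
  by_cases hvx : v = x
  · subst hvx
    simp [hxy]
    omega
  · by_cases hvy : v = y
    · subst hvy
      simp [hvx]
      omega
    · simp [hvx, hvy]

lemma sum_tsub_single_tsub_single_add (hxy : x ≠ y) (hx : 0 < f x) (hy : 0 < f y) {s : Finset ι}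
    (hys : y ∉ s) :
    ∑ v ∈ s, (f - Pi.single x 1 - Pi.single y 1 : ι → ℕ) v + (if x ∈ s then 1 else 0) =
      ∑ v ∈ s, f v := by
  rw [← sum_congr rfl fun v _ => tsub_single_tsub_single_add hxy hx hy v, sum_add_distrib,
    sum_add_distrib, sum_pi_single', sum_pi_single', if_neg hys, add_zero]

end TsubSingle

namespace SimpleGraph

section EdgeOperations

variable {V : Type*} {x y : V}

lemma neighborSet_sup_edge_left (H : SimpleGraph V) (hxy : x ≠ y) :
    (H ⊔ edge x y).neighborSet x = insert y (H.neighborSet x) := by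
  ext w
  simp only [mem_neighborSet, sup_adj, edge_adj, Set.mem_insert_iff]
  constructor
  · rintro (h | ⟨⟨-, rfl⟩ | ⟨h, -⟩, -⟩)
    exacts [Or.inr h, Or.inl rfl, absurd h hxy]
  · rintro (rfl | h)
    exacts [Or.inr ⟨by simp, hxy⟩, Or.inl h]

lemma neighborSet_sup_edge_of_ne (H : SimpleGraph V) {v : V} (hvx : v ≠ x) (hvy : v ≠ y) :
    (H ⊔ edge x y).neighborSet v = H.neighborSet v := by
  ext w
  simp [edge_adj, hvx, hvy]

lemma ncard_neighborSet_sup_edge [Finite V] [DecidableEq V] {H : SimpleGraph V}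
    (hn : ¬H.Adj x y) (hxy : x ≠ y) (v : V) :
    ((H ⊔ edge x y).neighborSet v).ncard =
      (H.neighborSet v).ncard + ((Pi.single x 1 : V → ℕ) v + (Pi.single y 1 : V → ℕ) v) := by
  by_cases hvx : v = x
  · subst hvx
    rw [neighborSet_sup_edge_left H hxy,
      Set.ncard_insert_of_notMem (show y ∉ H.neighborSet v from hn)]
    simp [hxy]
  by_cases hvy : v = y
  · subst hvy
    rw [edge_comm, neighborSet_sup_edge_left H hxy.symm,
      Set.ncard_insert_of_notMem (show x ∉ H.neighborSet v from fun h => hn h.symm)]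
    simp [hvx]
  rw [neighborSet_sup_edge_of_ne H hvx hvy]
  simp [hvx, hvy]

variable [Fintype V] (G : SimpleGraph V) [DecidableRel G.Adj] [DecidableRel (G \ edge x y).Adj]

lemma neighborFinset_sdiff_edge_of_ne {v : V} (hvx : v ≠ x) (hvy : v ≠ y) :
    (G \ edge x y).neighborFinset v = G.neighborFinset v := by
  ext w
  simp [edge_adj, hvx, hvy]

lemma neighborFinset_sdiff_edge_right [DecidableEq V] (hxy : x ≠ y) :
    (G \ edge x y).neighborFinset y = (G.neighborFinset y).erase x := by
  ext w
  simp only [mem_neighborFinset, sdiff_adj, edge_adj, mem_erase]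
  constructor
  · rintro ⟨h, hne⟩
    exact ⟨fun hw => hne ⟨by simp [hw], h.ne⟩, h⟩
  · rintro ⟨hw, h⟩
    exact ⟨h, fun ⟨hor, _⟩ => hor.elim (fun h' => hxy (h'.1.symm)) (fun h' => hw h'.2)⟩

end EdgeOperations

variable {V : Type*} [Fintype V] [DecidableEq V]

section Condition

variable (G : SimpleGraph V) [DecidableRel G.Adj] (V₂ : Finset V) (f : V → ℕ)

def oreCapacity (X : Finset V) : ℕ :=
  ∑ y ∈ V₂, min (f y) #(G.neighborFinset y ∩ X)

@[simp]
lemma oreCapacity_empty : G.oreCapacity V₂ f ∅ = 0 := by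
  simp [oreCapacity]

lemma oreCapacity_union_add_inter_le (X Y : Finset V) :
    G.oreCapacity V₂ f (X ∪ Y) + G.oreCapacity V₂ f (X ∩ Y) ≤
      G.oreCapacity V₂ f X + G.oreCapacity V₂ f Y := by
  simp only [oreCapacity, ← sum_add_distrib]
  refine sum_le_sum fun y _ => ?_
  set N := G.neighborFinset y
  have hmod : #(N ∩ (X ∪ Y)) + #(N ∩ (X ∩ Y)) = #(N ∩ X) + #(N ∩ Y) := by
    rw [inter_union_distrib_left, inter_inter_distrib_left, card_union_add_card_inter]
  have hX : #(N ∩ (X ∩ Y)) ≤ #(N ∩ X) := card_le_card (inter_subset_inter_left inter_subset_left)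
  have hY : #(N ∩ (X ∩ Y)) ≤ #(N ∩ Y) := card_le_card (inter_subset_inter_left inter_subset_right)
  omega

end Condition

def OreCondition (G : SimpleGraph V) [DecidableRel G.Adj] (V₁ V₂ : Finset V) (f : V → ℕ) : Prop :=
  ∀ X ⊆ V₁, ∑ x ∈ X, f x ≤ G.oreCapacity V₂ f X

namespace OreCondition

variable {G : SimpleGraph V} [DecidableRel G.Adj] {V₁ V₂ : Finset V} {f : V → ℕ}

lemma union_tight (h : G.OreCondition V₁ V₂ f) {X Y : Finset V} (hX : X ⊆ V₁) (hY : Y ⊆ V₁)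
    (hXt : ∑ x ∈ X, f x = G.oreCapacity V₂ f X) (hYt : ∑ y ∈ Y, f y = G.oreCapacity V₂ f Y) :
    ∑ x ∈ X ∪ Y, f x = G.oreCapacity V₂ f (X ∪ Y) := by
  have hunion := h (X ∪ Y) (union_subset hX hY)
  have hinter := h (X ∩ Y) (inter_subset_left.trans hX)
  have hsub := G.oreCapacity_union_add_inter_le V₂ f X Y
  have hmod := sum_union_inter (s₁ := X) (s₂ := Y) (f := f)
  omega

lemma exists_isGreatest_tight (h : G.OreCondition V₁ V₂ f) {S : Finset V} (hS : S ⊆ V₁) :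
    ∃ T, IsGreatest {X | X ⊆ S ∧ ∑ x ∈ X, f x = G.oreCapacity V₂ f X} T := by
  obtain ⟨T, hT, hmax⟩ := exists_max_image
    {X ∈ S.powerset | ∑ x ∈ X, f x = G.oreCapacity V₂ f X} card ⟨∅, by simp⟩
  rw [mem_filter, mem_powerset] at hT
  refine ⟨T, hT, fun X ⟨hXS, hXt⟩ => ?_⟩
  have hXT := h.union_tight (hXS.trans hS) (hT.1.trans hS) hXt hT.2
  have hcard := hmax (X ∪ T) (by simp [union_subset hXS hT.1, hXT])
  exact eq_of_superset_of_card_ge subset_union_right hcard ▸ subset_union_left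

lemma exists_adj_forall_tight_card_lt (h : G.OreCondition V₁ V₂ f) {x₀ : V} (hx₀ : x₀ ∈ V₁)
    (hf : 0 < f x₀) :
    ∃ y₀ ∈ V₂, G.Adj y₀ x₀ ∧ ∀ X ⊆ V₁.erase x₀,
      ∑ x ∈ X, f x = G.oreCapacity V₂ f X → #(G.neighborFinset y₀ ∩ X) < f y₀ := by
  obtain ⟨T, ⟨hTS, hTt⟩, hTmax⟩ := h.exists_isGreatest_tight (erase_subset x₀ V₁)
  suffices ∃ y₀ ∈ V₂, G.Adj y₀ x₀ ∧ #(G.neighborFinset y₀ ∩ T) < f y₀ by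
    obtain ⟨y₀, hy₀, hadj, hlt⟩ := this
    exact ⟨y₀, hy₀, hadj, fun X hX hXt =>
      (card_le_card (inter_subset_inter_left (hTmax ⟨hX, hXt⟩))).trans_lt hlt⟩
  by_contra! hsat
  have hx₀T : x₀ ∉ T := fun hx => by simpa using hTS hx
  have hcap : G.oreCapacity V₂ f (insert x₀ T) ≤ G.oreCapacity V₂ f T := by
    refine sum_le_sum fun y hy => ?_
    by_cases hadj : G.Adj y x₀
    · exact (min_le_left _ _).trans (le_min le_rfl (hsat y hy hadj))
    · rw [inter_insert_of_notMem (by simpa using hadj)]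
  have hins := h _ (insert_subset hx₀ (hTS.trans (erase_subset _ _)))
  rw [sum_insert hx₀T] at hins
  omega

end OreCondition

lemma oreCapacity_le_oreCapacity_sdiff_edge_add {G : SimpleGraph V} [DecidableRel G.Adj]
    {V₂ : Finset V} {f : V → ℕ} {x₀ y₀ : V} (hx₀ : x₀ ∉ V₂) (hy₀ : y₀ ∈ V₂) (hadj : G.Adj y₀ x₀)
    [DecidableRel (G \ edge x₀ y₀).Adj] (X : Finset V) :
    G.oreCapacity V₂ f X ≤
      (G \ edge x₀ y₀).oreCapacity V₂ (f - Pi.single x₀ 1 - Pi.single y₀ 1) X +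
        if x₀ ∈ X ∨ f y₀ ≤ #(G.neighborFinset y₀ ∩ X) then 1 else 0 := by
  set f' := f - Pi.single x₀ 1 - Pi.single y₀ 1
  have hxy : x₀ ≠ y₀ := fun h => hx₀ (h ▸ hy₀)
  have hrest : ∑ y ∈ V₂.erase y₀, min (f' y) #((G \ edge x₀ y₀).neighborFinset y ∩ X) =
      ∑ y ∈ V₂.erase y₀, min (f y) #(G.neighborFinset y ∩ X) := by
    refine sum_congr rfl fun y hy => ?_
    obtain ⟨hyy, hy⟩ := mem_erase.mp hy
    have hyx : y ≠ x₀ := fun h => hx₀ (h ▸ hy)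
    rw [neighborFinset_sdiff_edge_of_ne G hyx hyy]
    simp [f', hyx, hyy]
  have hf'y₀ : f' y₀ = f y₀ - 1 := by simp [f', hxy.symm]
  rw [oreCapacity, oreCapacity, ← add_sum_erase _ _ hy₀, ← add_sum_erase _ _ hy₀, hrest, hf'y₀,
    neighborFinset_sdiff_edge_right G hxy, erase_inter, card_erase_eq_ite]
  by_cases hx : x₀ ∈ X
  · have hmem : x₀ ∈ G.neighborFinset y₀ ∩ X :=
      mem_inter.mpr ⟨(mem_neighborFinset _ _ _).mpr hadj, hx⟩
    have hpos : 0 < #(G.neighborFinset y₀ ∩ X) := card_pos.mpr ⟨x₀, hmem⟩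
    rw [if_pos hmem, if_pos (Or.inl hx)]
    omega
  · have hmem : x₀ ∉ G.neighborFinset y₀ ∩ X := fun h => hx (mem_inter.mp h).2
    rw [if_neg hmem]
    split_ifs <;> omega

lemma OreCondition.sdiff_edge {G : SimpleGraph V} [DecidableRel G.Adj] {V₁ V₂ : Finset V}
    {f : V → ℕ} (h : G.OreCondition V₁ V₂ f) (hV : Disjoint V₁ V₂) {x₀ y₀ : V} (hx₀ : x₀ ∈ V₁)
    (hy₀ : y₀ ∈ V₂) (hadj : G.Adj y₀ x₀) (hfx : 0 < f x₀) (hfy : 0 < f y₀)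
    (htight : ∀ X ⊆ V₁.erase x₀,
      ∑ x ∈ X, f x = G.oreCapacity V₂ f X → #(G.neighborFinset y₀ ∩ X) < f y₀)
    [DecidableRel (G \ edge x₀ y₀).Adj] :
    (G \ edge x₀ y₀).OreCondition V₁ V₂ (f - Pi.single x₀ 1 - Pi.single y₀ 1) := by
  have hx₀V₂ : x₀ ∉ V₂ := Finset.disjoint_left.mp hV hx₀
  have hxy : x₀ ≠ y₀ := fun h => hx₀V₂ (h ▸ hy₀)
  intro X hX
  have hy₀X : y₀ ∉ X := fun h => Finset.disjoint_left.mp hV (hX h) hy₀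
  have hcap := oreCapacity_le_oreCapacity_sdiff_edge_add (f := f) hx₀V₂ hy₀ hadj X
  have hsum := sum_tsub_single_tsub_single_add hxy hfx hfy hy₀X
  have hOre := h X hX
  by_cases hx₀X : x₀ ∈ X
  · rw [if_pos (Or.inl hx₀X)] at hcap
    rw [if_pos hx₀X] at hsum
    omega
  · rw [if_neg hx₀X, add_zero] at hsum
    by_cases hXt : ∑ x ∈ X, f x = G.oreCapacity V₂ f X
    · -- `y₀` is unsaturated by tight sets avoiding `x₀`, so the capacity of `X` does not drop
      have hlt := htight X (subset_erase.mpr ⟨hX, hx₀X⟩) hXt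
      rw [if_neg (not_or.mpr ⟨hx₀X, hlt.not_ge⟩), add_zero] at hcap
      omega
    · split_ifs at hcap <;> omega

def IsOreSubgraph (G : SimpleGraph V) (V₁ V₂ : Finset V) (f : V → ℕ) (H : SimpleGraph V) :
    Prop :=
  H ≤ G ∧ (∀ x ∈ V₁, (H.neighborSet x).ncard = f x) ∧ (∀ y ∈ V₂, (H.neighborSet y).ncard ≤ f y)

namespace IsOreSubgraph

variable {G H : SimpleGraph V} {V₁ V₂ : Finset V} {f : V → ℕ}

omit [Fintype V] [DecidableEq V] in
lemma bot (hf : ∀ x ∈ V₁, f x = 0) : G.IsOreSubgraph V₁ V₂ f ⊥ :=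
  ⟨bot_le, fun x hx => by simp [hf x hx], fun y _ => by simp⟩

lemma sup_edge {x₀ y₀ : V} (hH : (G \ edge x₀ y₀).IsOreSubgraph V₁ V₂
      (f - Pi.single x₀ 1 - Pi.single y₀ 1) H)
    (hxy : x₀ ≠ y₀) (hadj : G.Adj x₀ y₀) (hfx : 0 < f x₀) (hfy : 0 < f y₀) :
    G.IsOreSubgraph V₁ V₂ f (H ⊔ edge x₀ y₀) := by
  obtain ⟨hle, hdeg₁, hdeg₂⟩ := hH
  have hn : ¬H.Adj x₀ y₀ := fun h => ((sdiff_adj _ _ _ _).mp (hle h)).2 ((edge_adj ..).mpr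
    ⟨Or.inl ⟨rfl, rfl⟩, hxy⟩)
  refine ⟨sup_le (hle.trans sdiff_le) ((edge_le_iff G).mpr (Or.inr hadj)), fun x hx => ?_,
    fun y hy => ?_⟩
  · rw [ncard_neighborSet_sup_edge hn hxy, hdeg₁ x hx, tsub_single_tsub_single_add hxy hfx hfy]
  · rw [ncard_neighborSet_sup_edge hn hxy, ← tsub_single_tsub_single_add hxy hfx hfy y]
    exact Nat.add_le_add_right (hdeg₂ y hy) _

lemma oreCondition [DecidableRel G.Adj] (hH : G.IsOreSubgraph V₁ V₂ f H)
    (hbip : ∀ u v, G.Adj u v → (u ∈ V₁ ∧ v ∈ V₂) ∨ (u ∈ V₂ ∧ v ∈ V₁)) (hV : Disjoint V₁ V₂) :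
    G.OreCondition V₁ V₂ f := by
  classical
  obtain ⟨hle, hdeg₁, hdeg₂⟩ := hH
  intro X hX
  calc ∑ x ∈ X, f x = ∑ x ∈ X, #(V₂.bipartiteAbove H.Adj x) := by
        refine sum_congr rfl fun x hx => ?_
        rw [← hdeg₁ x (hX hx), ← Set.ncard_coe_finset]
        congr 1
        ext y
        simp only [coe_bipartiteAbove, Set.mem_ofPred_eq, mem_neighborSet, iff_and_self]
        intro hxy
        rcases hbip x y (hle hxy) with ⟨_, hy⟩ | ⟨hx', _⟩
        exacts [hy, absurd (hX hx) (Finset.disjoint_right.mp hV hx')]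
    _ = ∑ y ∈ V₂, #(X.bipartiteBelow H.Adj y) :=
        sum_card_bipartiteAbove_eq_sum_card_bipartiteBelow _
    _ ≤ G.oreCapacity V₂ f X := by
        refine sum_le_sum fun y hy => le_min ?_ (card_le_card fun x hx => ?_)
        · rw [← Set.ncard_coe_finset]
          refine le_trans (Set.ncard_le_ncard fun x hx => ?_) (hdeg₂ y hy)
          simp only [coe_bipartiteBelow, Set.mem_ofPred_eq] at hx
          exact hx.2.symm
        · rw [mem_bipartiteBelow] at hx
          exact mem_inter.mpr ⟨(mem_neighborFinset _ _ _).mpr (hle hx.2).symm, hx.1⟩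

end IsOreSubgraph

theorem OreCondition.exists_isOreSubgraph {G : SimpleGraph V} [DecidableRel G.Adj]
    {V₁ V₂ : Finset V} {f : V → ℕ} (h : G.OreCondition V₁ V₂ f) (hV : Disjoint V₁ V₂) :
    ∃ H, G.IsOreSubgraph V₁ V₂ f H := by
  induction hn : ∑ x ∈ V₁, f x generalizing G f with
  | zero => exact ⟨⊥, .bot (sum_eq_zero_iff.mp hn)⟩
  | succ n ih =>
    classical
    obtain ⟨x₀, hx₀, hfx⟩ : ∃ x ∈ V₁, 0 < f x := by
      by_contra! hzero
      simp [sum_eq_zero fun x hx => Nat.le_zero.mp (hzero x hx)] at hn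
    obtain ⟨y₀, hy₀, hadj, htight⟩ := h.exists_adj_forall_tight_card_lt hx₀ hfx
    have hfy : 0 < f y₀ := by simpa using htight ∅ (empty_subset _) (by simp)
    have hxy : x₀ ≠ y₀ := fun h => Finset.disjoint_left.mp hV hx₀ (h ▸ hy₀)
    have hsum : ∑ x ∈ V₁, (f - Pi.single x₀ 1 - Pi.single y₀ 1 : V → ℕ) x = n := by
      have := sum_tsub_single_tsub_single_add hxy hfx hfy (Finset.disjoint_right.mp hV hy₀)
      rw [if_pos hx₀, hn] at this
      omega
    obtain ⟨H, hH⟩ := ih (h.sdiff_edge hV hx₀ hy₀ hadj hfx hfy htight) hsum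
    exact ⟨H ⊔ edge x₀ y₀, hH.sup_edge hxy hadj.symm hfx hfy⟩

end SimpleGraph

theorem stmt7_general (V : Type) [Fintype V] [DecidableEq V]
    (G : SimpleGraph V) [DecidableRel G.Adj]
    (V₁ V₂ : Finset V) (hDisj : Disjoint V₁ V₂)
    (hbip : ∀ u v, G.Adj u v → (u ∈ V₁ ∧ v ∈ V₂) ∨ (u ∈ V₂ ∧ v ∈ V₁))
    (f : V → ℕ) :
    (∃ H : SimpleGraph V, H ≤ G ∧
      (∀ x ∈ V₁, (H.neighborSet x).ncard = f x) ∧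
      (∀ y ∈ V₂, (H.neighborSet y).ncard ≤ f y)) ↔
    (∀ X ⊆ V₁, ∑ x ∈ X, f x ≤ ∑ y ∈ V₂, min (f y) ((G.neighborFinset y ∩ X).card)) :=
  ⟨fun ⟨_, hH⟩ => SimpleGraph.IsOreSubgraph.oreCondition hH hbip hDisj,
    fun h => SimpleGraph.OreCondition.exists_isOreSubgraph h hDisj⟩

theorem stmt7 (V : Type) [Fintype V] [DecidableEq V]
    (G : SimpleGraph V) [DecidableRel G.Adj]
    (V₁ V₂ : Finset V) (hU : V₁ ∪ V₂ = Finset.univ) (hDisj : Disjoint V₁ V₂)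
    (hbip : ∀ u v, G.Adj u v → (u ∈ V₁ ∧ v ∈ V₂) ∨ (u ∈ V₂ ∧ v ∈ V₁))
    (f : V → ℕ) :
    (∃ H : SimpleGraph V, H ≤ G ∧
      (∀ x ∈ V₁, (H.neighborSet x).ncard = f x) ∧
      (∀ y ∈ V₂, (H.neighborSet y).ncard ≤ f y)) ↔
    (∀ X ⊆ V₁, ∑ x ∈ X, f x ≤ ∑ y ∈ V₂, min (f y) ((G.neighborFinset y ∩ X).card)) :=
  stmt7_general V G V₁ V₂ hDisj hbip f
end

section
/- (Kleitman's lemma / Harris inequality) Fix p ∈ (0,1) and consider the product measure on subsets of [n] where each element is included independently with probability p. If 𝒜 and ℬ are monotonically increasing families of subsets of [n], then P(𝒜 ∩ ℬ) ≥ P(𝒜)·P(ℬ). -/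
/-- The probability that a `p`-random subset of `Fin n` belongs to the family `𝒜`. -/
noncomputable def famProb (n : ℕ) (p : ℝ) (𝒜 : Finset (Finset (Fin n))) : ℝ :=
  ∑ A ∈ 𝒜, p ^ A.card * (1 - p) ^ (n - A.card)

/-!
The weight `μ s = p ^ #s * (1 - p) ^ (#ι - #s)` of the `p`-biased product measure satisfies
`μ s * μ t = μ (s ∩ t) * μ (s ∪ t)`, since `#(s ∩ t) + #(s ∪ t) = #s + #t`. So the FKG
inequality applies to `μ`, and for the indicators of two up-sets it is the claimed inequality.
-/

open Finset

namespace Finset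

lemma monotone_boole_mem {ι : Type*} [DecidableEq ι] {𝒜 : Finset (Finset ι)}
    (h𝒜 : IsUpperSet (𝒜 : Set (Finset ι))) :
    Monotone fun s ↦ if s ∈ 𝒜 then (1 : ℝ) else 0 := by
  intro s t hst
  by_cases hs : s ∈ 𝒜
  · simp [hs, mem_coe.1 (h𝒜 hst hs)]
  · simp only [hs, if_false]
    positivity

variable {ι : Type*} [Fintype ι]

noncomputable def bernoulliWeight (p : ℝ) (s : Finset ι) : ℝ :=
  p ^ #s * (1 - p) ^ (Fintype.card ι - #s)

lemma bernoulliWeight_nonneg {p : ℝ} (hp₀ : 0 ≤ p) (hp₁ : p ≤ 1) (s : Finset ι) :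
    0 ≤ bernoulliWeight p s :=
  mul_nonneg (pow_nonneg hp₀ _) (pow_nonneg (sub_nonneg.2 hp₁) _)

lemma sum_bernoulliWeight (p : ℝ) : ∑ s : Finset ι, bernoulliWeight p s = 1 := by
  simp [bernoulliWeight, Fintype.sum_pow_mul_eq_add_pow]

variable [DecidableEq ι]

lemma bernoulliWeight_inter_mul_bernoulliWeight_union (p : ℝ) (s t : Finset ι) :
    bernoulliWeight p (s ∩ t) * bernoulliWeight p (s ∪ t) =
      bernoulliWeight p s * bernoulliWeight p t := by
  have hcard := card_inter_add_card_union s t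
  have hs := card_le_univ s
  have ht := card_le_univ t
  have hinter := card_le_univ (s ∩ t)
  have hunion := card_le_univ (s ∪ t)
  have hcompl : Fintype.card ι - #(s ∩ t) + (Fintype.card ι - #(s ∪ t)) =
      Fintype.card ι - #s + (Fintype.card ι - #t) := by
    omega
  unfold bernoulliWeight
  rw [mul_mul_mul_comm, ← pow_add, ← pow_add, mul_mul_mul_comm, ← pow_add, ← pow_add, hcard,
    hcompl]

theorem sum_bernoulliWeight_mul_le_sum_inter {p : ℝ} (hp₀ : 0 ≤ p) (hp₁ : p ≤ 1)
    {𝒜 ℬ : Finset (Finset ι)} (h𝒜 : IsUpperSet (𝒜 : Set (Finset ι)))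
    (hℬ : IsUpperSet (ℬ : Set (Finset ι))) :
    (∑ s ∈ 𝒜, bernoulliWeight p s) * ∑ s ∈ ℬ, bernoulliWeight p s ≤
      ∑ s ∈ 𝒜 ∩ ℬ, bernoulliWeight p s := by
  have key := fkg _ _ (bernoulliWeight p) (bernoulliWeight_nonneg hp₀ hp₁)
    (fun _ ↦ by positivity) (fun _ ↦ by positivity) (monotone_boole_mem h𝒜)
    (monotone_boole_mem hℬ)
    (fun s t ↦ (bernoulliWeight_inter_mul_bernoulliWeight_union p s t).ge)
  rw [inter_comm]
  simpa [sum_bernoulliWeight, ← ite_and, ← mem_inter] using key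

end Finset

lemma famProb_eq_sum_bernoulliWeight (n : ℕ) (p : ℝ) (𝒜 : Finset (Finset (Fin n))) :
    famProb n p 𝒜 = ∑ s ∈ 𝒜, bernoulliWeight p s := by
  simp [famProb, bernoulliWeight]

theorem stmt14 (n : ℕ) (p : ℝ) (hp : p ∈ Set.Ioo (0 : ℝ) 1)
    (𝒜 ℬ : Finset (Finset (Fin n)))
    (h𝒜 : ∀ A ∈ 𝒜, ∀ A' : Finset (Fin n), A ⊆ A' → A' ∈ 𝒜)
    (hℬ : ∀ B ∈ ℬ, ∀ B' : Finset (Fin n), B ⊆ B' → B' ∈ ℬ) :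
    famProb n p 𝒜 * famProb n p ℬ ≤ famProb n p (𝒜 ∩ ℬ) := by
  simp only [famProb_eq_sum_bernoulliWeight]
  exact sum_bernoulliWeight_mul_le_sum_inter hp.1.le hp.2.le
    (fun A A' hAA' hA ↦ h𝒜 A hA A' hAA') (fun B B' hBB' hB ↦ hℬ B hB B' hBB')
end

section
/- Let c = 50 and let k be sufficiently large. If t ≥ (1/50)·exp((c−2)²k/(6c)), then there exists p ∈ (0, 1/2) satisfying simultaneously p · P(Bin((c−5)k, p) ≥ 5k) = 5k/t and P(Bin(ck, p) ≥ (c−1)k) ≤ 1/t³. -/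
/-!
Let `f p = p * P(Bin(45k, p) ≥ 5k)`. Since `P(Bin(n, p) ≥ m) ≥ p ^ m` (the first `m` trials may all
succeed), `f (1/4) ≥ 4 ^ (-(5k+1))`, and this exceeds `5k / t` for large `k` because
`t ≥ e ^ (7.68 k) / 50` and `e ^ 7.68 > 2 ^ 10`. The intermediate value theorem then gives
`p ∈ (0, 1/4]` with `f p = 5k / t`, hence `p ^ (5k+1) ≤ 5k / t`. Finally the crude bound
`P(Bin(50k, p) ≥ 49k) ≤ 2 ^ (50k) p ^ (49k) ≤ 2 ^ (50k) (p ^ (5k+1)) ^ 9 ≤ 2 ^ (50k) (5k / t) ^ 9`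
is at most `t ^ (-3)`, since `t ^ 6 ≥ e ^ (46.08 k) / 50 ^ 6` outgrows `2 ^ (50k) (5k) ^ 9`.
-/

/-- `P(Bin(n,p) ≥ m)`, the upper tail of the binomial distribution. -/
noncomputable def binomTail (n m : ℕ) (p : ℝ) : ℝ :=
  ∑ i ∈ Finset.Icc m n, (n.choose i : ℝ) * p ^ i * (1 - p) ^ (n - i)

open Filter Finset

lemma Nat.choose_le_choose_add_add (a b m : ℕ) : a.choose b ≤ (a + m).choose (b + m) := by
  induction m with
  | zero => rfl
  | succ m ih =>
    rw [← add_assoc, ← add_assoc, Nat.choose_succ_succ]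
    omega

lemma continuous_binomTail (n m : ℕ) : Continuous (binomTail n m) := by
  unfold binomTail
  fun_prop

lemma pow_le_binomTail {n m : ℕ} (hmn : m ≤ n) {p : ℝ} (hp₀ : 0 ≤ p) (hp₁ : p ≤ 1) :
    p ^ m ≤ binomTail n m p := by
  have hq : 0 ≤ 1 - p := by linarith
  calc p ^ m = p ^ m * (p + (1 - p)) ^ (n - m) := by simp
    _ = ∑ j ∈ range (n - m + 1),
          ((n - m).choose j : ℝ) * p ^ (m + j) * (1 - p) ^ (n - (m + j)) := by
      rw [add_pow, mul_sum]
      refine sum_congr rfl fun j _ ↦ ?_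
      rw [show n - (m + j) = n - m - j by omega, pow_add]
      ring
    _ ≤ ∑ j ∈ range (n - m + 1),
          (n.choose (m + j) : ℝ) * p ^ (m + j) * (1 - p) ^ (n - (m + j)) := by
      gcongr with j
      have := Nat.choose_le_choose_add_add (n - m) j m
      rw [show n - m + m = n by omega, add_comm j] at this
      exact_mod_cast this
    _ = binomTail n m p := by
      rw [binomTail, ← Ico_add_one_right_eq_Icc, sum_Ico_eq_sum_range,
        show n + 1 - m = n - m + 1 by omega]

lemma binomTail_le_two_pow_mul_pow (n m : ℕ) {p : ℝ} (hp₀ : 0 ≤ p) (hp₁ : p ≤ 1) :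
    binomTail n m p ≤ 2 ^ n * p ^ m := by
  have hq : 0 ≤ 1 - p := by linarith
  calc binomTail n m p ≤ ∑ i ∈ Icc m n, (n.choose i : ℝ) * p ^ m := by
        refine sum_le_sum fun i hi ↦ ?_
        rw [mul_assoc]
        gcongr
        calc p ^ i * (1 - p) ^ (n - i) ≤ p ^ m * 1 :=
              mul_le_mul (pow_le_pow_of_le_one hp₀ hp₁ (mem_Icc.1 hi).1)
                (pow_le_one₀ hq (by linarith)) (by positivity) (by positivity)
          _ = p ^ m := mul_one _
    _ ≤ ∑ i ∈ range (n + 1), (n.choose i : ℝ) * p ^ m := by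
        refine sum_le_sum_of_subset_of_nonneg (fun i hi ↦ ?_) fun i _ _ ↦ by positivity
        simp only [mem_Icc, mem_range] at hi ⊢
        omega
    _ = 2 ^ n * p ^ m := by
        rw [← sum_mul]
        exact_mod_cast congrArg (fun x : ℕ ↦ (x : ℝ) * p ^ m) (Nat.sum_range_choose n)

lemma pow_succ_le_mul_binomTail {n m : ℕ} (hmn : m ≤ n) {p : ℝ} (hp₀ : 0 ≤ p) (hp₁ : p ≤ 1) :
    p ^ (m + 1) ≤ p * binomTail n m p := by
  rw [pow_succ']
  exact mul_le_mul_of_nonneg_left (pow_le_binomTail hmn hp₀ hp₁) hp₀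

lemma binomTail_le_of_pow_le (n : ℕ) {m l j : ℕ} (hjl : j * l ≤ m) {p y : ℝ} (hp₀ : 0 ≤ p)
    (hp₁ : p ≤ 1) (hpy : p ^ l ≤ y) : binomTail n m p ≤ 2 ^ n * y ^ j :=
  calc binomTail n m p ≤ 2 ^ n * p ^ m := binomTail_le_two_pow_mul_pow n m hp₀ hp₁
    _ ≤ 2 ^ n * (p ^ l) ^ j := by
      rw [← pow_mul, mul_comm l]
      exact mul_le_mul_of_nonneg_left (pow_le_pow_of_le_one hp₀ hp₁ hjl) (by positivity)
    _ ≤ 2 ^ n * y ^ j := by gcongr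

lemma exists_mul_binomTail_eq {n m : ℕ} (hmn : m ≤ n) {q y : ℝ} (hq₀ : 0 ≤ q) (hq₁ : q ≤ 1)
    (hy₀ : 0 < y) (hy : y ≤ q ^ (m + 1)) :
    ∃ p ∈ Set.Ioc 0 q, p * binomTail n m p = y := by
  have hcont : ContinuousOn (fun p ↦ p * binomTail n m p) (Set.Icc 0 q) :=
    (continuous_id.mul (continuous_binomTail n m)).continuousOn
  have hy_mem : y ∈ Set.Icc (0 * binomTail n m 0) (q * binomTail n m q) :=
    ⟨by simpa using hy₀.le, hy.trans (pow_succ_le_mul_binomTail hmn hq₀ hq₁)⟩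
  obtain ⟨p, ⟨hp₀, hpq⟩, hpy⟩ := intermediate_value_Icc hq₀ hcont hy_mem
  refine ⟨p, ⟨hp₀.lt_of_ne ?_, hpq⟩, hpy⟩
  rintro rfl
  simp only [zero_mul] at hpy
  exact hy₀.ne hpy

lemma eventually_const_mul_pow_mul_pow_le_pow (C : ℝ) (d : ℕ) {a b : ℝ} (ha : 0 < a)
    (hab : a < b) : ∀ᶠ n : ℕ in atTop, C * (n : ℝ) ^ d * a ^ n ≤ b ^ n := by
  have hlittle := ((isLittleO_pow_const_const_pow_of_one_lt (R := ℝ) d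
    ((one_lt_div ha).2 hab)).const_mul_left C)
  filter_upwards [hlittle.bound one_pos] with n hn
  have hb : 0 < b := ha.trans hab
  rw [one_mul, div_pow, Real.norm_of_nonneg (by positivity : (0 : ℝ) ≤ b ^ n / a ^ n)] at hn
  calc C * (n : ℝ) ^ d * a ^ n ≤ ‖C * (n : ℝ) ^ d‖ * a ^ n := by
        gcongr
        exact Real.le_norm_self _
    _ ≤ b ^ n / a ^ n * a ^ n := by gcongr
    _ = b ^ n := div_mul_cancel₀ _ (by positivity)

lemma two_pow_ten_lt_exp : (2 : ℝ) ^ 10 < Real.exp (48 ^ 2 / 300) := by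
  calc (2 : ℝ) ^ 10 < 2.7182818283 ^ 7 := by norm_num
    _ < Real.exp 1 ^ 7 := by gcongr; exact Real.exp_one_gt_d9
    _ = Real.exp 7 := by rw [← Real.exp_nat_mul]; norm_num
    _ ≤ Real.exp (48 ^ 2 / 300) := Real.exp_le_exp.2 (by norm_num)

lemma two_pow_fifty_lt_exp_pow_six : (2 : ℝ) ^ 50 < Real.exp (48 ^ 2 / 300) ^ 6 :=
  calc (2 : ℝ) ^ 50 < (2 ^ 10) ^ 6 := by norm_num
    _ < Real.exp (48 ^ 2 / 300) ^ 6 := by gcongr; exact two_pow_ten_lt_exp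

lemma five_mul_div_le_one_fourth_pow {ε t : ℝ} {k : ℕ} (hk : 0 < k)
    (hε : 1000 * (k : ℝ) * (2 ^ 10) ^ k ≤ ε ^ k) (ht : 1 / 50 * ε ^ k ≤ t) :
    5 * (k : ℝ) / t ≤ (1 / 4) ^ (5 * k + 1) := by
  have hk₀ : (0 : ℝ) < k := by exact_mod_cast hk
  have hε₀ : 0 < ε ^ k := lt_of_lt_of_le (by positivity) hε
  calc 5 * (k : ℝ) / t ≤ 5 * k / (1 / 50 * ε ^ k) := by gcongr
    _ ≤ 5 * k / (1 / 50 * (1000 * k * (2 ^ 10) ^ k)) := by gcongr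
    _ = (1 / 4) ^ (5 * k + 1) := by
      rw [pow_succ (1 / 4 : ℝ), pow_mul, show (1 / 4 : ℝ) ^ 5 = 1 / 2 ^ 10 by norm_num,
        one_div_pow]
      field_simp
      ring

lemma two_pow_mul_div_pow_le_one_div_pow {ε t : ℝ} {k : ℕ} (hε₀ : 0 ≤ ε)
    (hε : 50 ^ 6 * 5 ^ 9 * (k : ℝ) ^ 9 * (2 ^ 50) ^ k ≤ (ε ^ 6) ^ k) (ht : 1 / 50 * ε ^ k ≤ t)
    (ht₀ : 0 < t) : 2 ^ (50 * k) * (5 * (k : ℝ) / t) ^ 9 ≤ 1 / t ^ 3 := by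
  have hkey : 2 ^ (50 * k) * (5 * (k : ℝ)) ^ 9 ≤ t ^ 6 :=
    calc 2 ^ (50 * k) * (5 * (k : ℝ)) ^ 9
          = 50 ^ 6 * 5 ^ 9 * k ^ 9 * (2 ^ 50) ^ k / 50 ^ 6 := by rw [← pow_mul]; ring
      _ ≤ (ε ^ 6) ^ k / 50 ^ 6 := by gcongr
      _ = (1 / 50 * ε ^ k) ^ 6 := by rw [← pow_mul, mul_comm 6, pow_mul]; ring
      _ ≤ t ^ 6 := by gcongr
  rw [div_pow, mul_div_assoc', div_le_div_iff₀ (by positivity) (by positivity)]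
  calc 2 ^ (50 * k) * (5 * (k : ℝ)) ^ 9 * t ^ 3 ≤ t ^ 6 * t ^ 3 := by gcongr
    _ = 1 * t ^ 9 := by ring

theorem stmt18 :
    ∃ k₀ : ℕ, ∀ k : ℕ, k₀ ≤ k → ∀ t : ℕ,
      (1 / 50 : ℝ) * Real.exp (48 ^ 2 * (k : ℝ) / 300) ≤ (t : ℝ) →
      ∃ p ∈ Set.Ioo (0 : ℝ) (1 / 2),
        p * binomTail (45 * k) (5 * k) p = 5 * (k : ℝ) / (t : ℝ) ∧
        binomTail (50 * k) (49 * k) p ≤ 1 / (t : ℝ) ^ 3 := by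
  obtain ⟨k₀, hk₀⟩ := eventually_atTop.1 <| (eventually_ge_atTop 3).and <|
    (eventually_const_mul_pow_mul_pow_le_pow 1000 1 (by positivity) two_pow_ten_lt_exp).and
    (eventually_const_mul_pow_mul_pow_le_pow (50 ^ 6 * 5 ^ 9) 9 (by positivity)
      two_pow_fifty_lt_exp_pow_six)
  refine ⟨k₀, fun k hk t ht ↦ ?_⟩
  obtain ⟨hk, hroot, htail⟩ := hk₀ k hk
  rw [show 48 ^ 2 * (k : ℝ) / 300 = k * (48 ^ 2 / 300) by ring, Real.exp_nat_mul] at ht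
  rw [pow_one] at hroot
  have ht₀ : (0 : ℝ) < t := lt_of_lt_of_le (by positivity) ht
  obtain ⟨p, ⟨hp₀, hp⟩, hpy⟩ := exists_mul_binomTail_eq (by omega : 5 * k ≤ 45 * k)
    (by norm_num) (by norm_num) (by positivity)
    (five_mul_div_le_one_fourth_pow (by omega) hroot ht)
  refine ⟨p, ⟨hp₀, by linarith⟩, hpy, ?_⟩
  calc binomTail (50 * k) (49 * k) p ≤ 2 ^ (50 * k) * (5 * (k : ℝ) / t) ^ 9 :=
        binomTail_le_of_pow_le _ (by omega) hp₀.le (by linarith)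
          (hpy ▸ pow_succ_le_mul_binomTail (by omega) hp₀.le (by linarith))
    _ ≤ 1 / t ^ 3 := two_pow_mul_div_pow_le_one_div_pow (Real.exp_pos _).le htail ht ht₀
end
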